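/- Fix n ≥ 2 and k ≥ 1, and let (k) denote the one-row partition. For every permutation w ∈ S_n and every reduced word (i_1,…,i_ℓ) of w (so w = s_{i_1}⋯s_{i_ℓ} with ℓ the Coxeter length of w), the K-Demazure crystal satisfies SVT^n_{(i_1,…,i_ℓ)}((k)) = { T ∈ SVT^n((k)) : every entry appearing in T is at most w(1) }. In particular, SVT^n_{(i_1,…,i_ℓ)}((k)) depends only on w(1), hence only on the coset w⟨s_2,…,s_{n−1}⟩, and the minimal length representative of this coset is s_{w(1)−1}⋯s_2 s_1. -/

import Mathlib

/-!
On a one-row tableau the signature rule is transparent: the unpaired `-` columns for `i` are the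
boxes containing `i + 1` but not `i`, so `e_i^max` works through them until every box containing
`i + 1` also contains `i`, never changing the image of a box under `i + 1 ↦ i`, and
`(e_i^K)^max` then deletes the remaining entries `i + 1`. Hence the Demazure step for `i` replaces every entry
`i + 1` by `i`, and `T` lies in the crystal of a word iff the composite substitution sends all
entries of `T` to `1`.

For a reduced word `i :: rest` with `u = wordPerm rest`, counting inversions gives
`u⁻¹ i < u⁻¹ (i + 1)`, so `u 1 ≠ i + 1`; by induction along the word the entries sent to `1`
are exactly those `≤ w 1`. For the coset statements, `s_{w(1)-1} ⋯ s_1` sends `1` to `w 1`,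
while a word of length `ℓ` moves `1` to at most `1 + ℓ`.
-/

open scoped Classical

noncomputable section

namespace SVTCrystal

/-- A filling assigns to each (row, column) position (0-indexed) a finite set of entries. -/
abbrev Filling : Type := ℕ → ℕ → Finset ℕ

/-- `lam` is a partition shape with at most `n` rows. -/
def IsPartitionShape (n : ℕ) (lam : ℕ → ℕ) : Prop :=
  (∀ r, lam (r + 1) ≤ lam r) ∧ (∀ r, n ≤ r → lam r = 0)

/-- Semistandard set-valued tableau of shape `lam` with entries in `{1,…,n}`. -/
structure IsSVT (n : ℕ) (lam : ℕ → ℕ) (t : Filling) : Prop where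
  boxNonempty : ∀ r c, c < lam r → (t r c).Nonempty
  emptyOutside : ∀ r c, ¬ c < lam r → t r c = ∅
  entryBounds : ∀ r c a, a ∈ t r c → 1 ≤ a ∧ a ≤ n
  rowWeak : ∀ r c a b, a ∈ t r c → b ∈ t r (c + 1) → a ≤ b
  colStrict : ∀ r c a b, a ∈ t r c → b ∈ t (r + 1) c → a < b

/-- Semistandard Young tableau: a set-valued tableau all of whose boxes are singletons. -/
def IsSSYT (n : ℕ) (lam : ℕ → ℕ) (t : Filling) : Prop :=
  IsSVT n lam t ∧ ∀ r c, c < lam r → (t r c).card = 1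

/-- The weight: `wt n lam t j` is the number of boxes of `t` containing the entry `j`. -/
def wt (n : ℕ) (lam : ℕ → ℕ) (t : Filling) (j : ℕ) : ℕ :=
  ((Finset.range n ×ˢ Finset.range (lam 0)).filter (fun p => j ∈ t p.1 p.2)).card

/-- The excess: total number of extra entries. -/
def excess (n : ℕ) (lam : ℕ → ℕ) (t : Filling) : ℕ :=
  ∑ p ∈ Finset.range n ×ˢ Finset.range (lam 0), ((t p.1 p.2).card - 1)

/-- Column `c` contains the entry `a`. -/
def colHas (n : ℕ) (t : Filling) (a c : ℕ) : Prop := ∃ r, r < n ∧ a ∈ t r c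

/-- The sign of column `c` for the `i`-signature rule: `+` (true) if the column contains `i`
but not `i+1`, `-` (false) if it contains `i+1` but not `i`. -/
def colSign (n : ℕ) (t : Filling) (i c : ℕ) : Option Bool :=
  if colHas n t i c ∧ ¬ colHas n t (i + 1) c then some true
  else if colHas n t (i + 1) c ∧ ¬ colHas n t i c then some false
  else none

/-- The number of `-` (false) signs left uncanceled after scanning the word left-to-right,
iteratively canceling `-+` pairs. -/
def mctr (w : List Bool) : ℕ := w.foldl (fun cnt b => if b then cnt - 1 else cnt + 1) 0

/-- The number of `+` (true) signs left uncanceled, scanning right-to-left. -/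
def pctr (w : List Bool) : ℕ := w.foldr (fun b cnt => if b then cnt + 1 else cnt - 1) 0

/-- The word of column signs of the columns before column `c`. -/
def colWordBefore (n : ℕ) (t : Filling) (i c : ℕ) : List Bool :=
  (List.range c).filterMap (colSign n t i)

/-- The word of column signs of the columns after column `c` (among columns `< ncols`). -/
def colWordAfter (n ncols : ℕ) (t : Filling) (i c : ℕ) : List Bool :=
  ((List.range ncols).drop (c + 1)).filterMap (colSign n t i)

/-- Column `c` carries an uncanceled `+` for the `i`-signature rule. -/
def PlusCol (n ncols : ℕ) (t : Filling) (i c : ℕ) : Prop :=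
  c < ncols ∧ colSign n t i c = some true ∧ mctr (colWordBefore n t i c) = 0

/-- Column `c` carries an uncanceled `-` for the `i`-signature rule. -/
def MinusCol (n ncols : ℕ) (t : Filling) (i c : ℕ) : Prop :=
  c < ncols ∧ colSign n t i c = some false ∧ pctr (colWordAfter n ncols t i c) = 0

/-- Column `c` is the rightmost uncanceled `+`. -/
def fBoxCol (n ncols : ℕ) (t : Filling) (i c : ℕ) : Prop :=
  PlusCol n ncols t i c ∧ ∀ c', PlusCol n ncols t i c' → c' ≤ c

/-- Column `c` is the leftmost uncanceled `-`. -/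
def eBoxCol (n ncols : ℕ) (t : Filling) (i c : ℕ) : Prop :=
  MinusCol n ncols t i c ∧ ∀ c', MinusCol n ncols t i c' → c ≤ c'

/-- Replace the content of the box in row `r`, column `c` by `A`. -/
def updateBox (t : Filling) (r c : ℕ) (A : Finset ℕ) : Filling :=
  fun r' c' => if r' = r ∧ c' = c then A else t r' c'

/-- The set-valued crystal operator `f_i` (signature rule). -/
def fRaw (n : ℕ) (lam : ℕ → ℕ) (i : ℕ) (t : Filling) : Option Filling :=
  if h : ∃ c, fBoxCol n (lam 0) t i c then
    let c := Classical.choose h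
    if hr : ∃ r, r < n ∧ i ∈ t r c then
      let r := Classical.choose hr
      if i ∈ t r (c + 1) then
        some (updateBox (updateBox t r (c + 1) ((t r (c + 1)).erase i)) r c
          (insert (i + 1) (t r c)))
      else some (updateBox t r c (insert (i + 1) ((t r c).erase i)))
    else none
  else none

/-- The set-valued crystal operator `e_i` (signature rule). -/
def eRaw (n : ℕ) (lam : ℕ → ℕ) (i : ℕ) (t : Filling) : Option Filling :=
  if h : ∃ c, eBoxCol n (lam 0) t i c then
    let c := Classical.choose h
    if hr : ∃ r, r < n ∧ (i + 1) ∈ t r c then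
      let r := Classical.choose hr
      if 0 < c ∧ (i + 1) ∈ t r (c - 1) then
        some (updateBox (updateBox t r (c - 1) ((t r (c - 1)).erase (i + 1))) r c
          (insert i (t r c)))
      else some (updateBox t r c (insert i ((t r c).erase (i + 1))))
    else none
  else none

/-- Iterate a partially-defined operator. -/
def iterOpt (g : Filling → Option Filling) : ℕ → Filling → Option Filling
  | 0, t => some t
  | m + 1, t => (iterOpt g m t).bind g

/-- Highest weight (Yamanouchi) elements. -/
def IsYamanouchi (n : ℕ) (lam : ℕ → ℕ) (t : Filling) : Prop :=
  ∀ i, 1 ≤ i → i < n → eRaw n lam i t = none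

/-- Closure of `t0` under the crystal operators `e_i`, `f_i` for `1 ≤ i < n`. -/
inductive Reach (n : ℕ) (lam : ℕ → ℕ) (t0 : Filling) : Filling → Prop
  | base : Reach n lam t0 t0
  | stepF : ∀ {t t' : Filling} (i : ℕ), 1 ≤ i → i < n → Reach n lam t0 t →
      fRaw n lam i t = some t' → Reach n lam t0 t'
  | stepE : ∀ {t t' : Filling} (i : ℕ), 1 ≤ i → i < n → Reach n lam t0 t →
      eRaw n lam i t = some t' → Reach n lam t0 t'

/-- The one-row partition `(s)`. -/
def rowShape (s : ℕ) : ℕ → ℕ := fun r => if r = 0 then s else 0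

/-- The one-column partition `(1^k)`. -/
def colShape (k : ℕ) : ℕ → ℕ := fun r => if r < k then 1 else 0

/-- The hook partition `(s, 1^e)`. -/
def hookShape (s e : ℕ) : ℕ → ℕ := fun r => if r = 0 then s else if r ≤ e then 1 else 0

/-! ### K-theory crystal operators (for single rows and single columns) -/

/-- Some box of the tableau contains the entry `a`. -/
def containsEntry (n : ℕ) (lam : ℕ → ℕ) (t : Filling) (a : ℕ) : Prop :=
  ∃ r c, r < n ∧ c < lam r ∧ a ∈ t r c

/-- `p` is the rightmost box of `t` containing `i`. -/
def KBoxF (n : ℕ) (lam : ℕ → ℕ) (t : Filling) (i : ℕ) (p : ℕ × ℕ) : Prop :=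
  p.1 < n ∧ p.2 < lam p.1 ∧ i ∈ t p.1 p.2 ∧
    ∀ q : ℕ × ℕ, q.1 < n → q.2 < lam q.1 → i ∈ t q.1 q.2 → q.2 ≤ p.2

/-- The K-crystal operator `f_i^K`: if `i` occurs in `t` and `i+1` does not, add `i+1` to
the rightmost box containing `i`; otherwise `0`. -/
def fK (n : ℕ) (lam : ℕ → ℕ) (i : ℕ) (t : Filling) : Option Filling :=
  if h : (∃ p : ℕ × ℕ, KBoxF n lam t i p) ∧ ¬ containsEntry n lam t (i + 1) then
    let p := Classical.choose h.1
    some (updateBox t p.1 p.2 (insert (i + 1) (t p.1 p.2)))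
  else none

/-- The K-crystal operator `e_i^K`: delete `i+1` from the box containing both `i` and `i+1`,
if such a box exists; otherwise `0`. -/
def eK (n : ℕ) (lam : ℕ → ℕ) (i : ℕ) (t : Filling) : Option Filling :=
  if h : ∃ p : ℕ × ℕ, p.1 < n ∧ p.2 < lam p.1 ∧ i ∈ t p.1 p.2 ∧ (i + 1) ∈ t p.1 p.2 then
    let p := Classical.choose h
    some (updateBox t p.1 p.2 ((t p.1 p.2).erase (i + 1)))
  else none

/-- `t'` is the result of applying `g` to `t` as many times as possible. -/
def MaxApply (g : Filling → Option Filling) (t t' : Filling) : Prop :=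
  (∃ m, iterOpt g m t = some t') ∧ g t' = none

/-- One Demazure step: apply `e_i` as many times as possible, then `e_i^K` as many times
as possible (here `eKop i` is the `i`-th K-operator). -/
def DemStep (n : ℕ) (lam : ℕ → ℕ) (eKop : ℕ → Filling → Option Filling) (i : ℕ)
    (t t' : Filling) : Prop :=
  ∃ t1, MaxApply (eRaw n lam i) t t1 ∧ MaxApply (eKop i) t1 t'

/-- `DemReach n lam eKop [i₁,…,iℓ] t u` holds when
`u = (e_{iℓ}^K)^max e_{iℓ}^max ⋯ (e_{i₁}^K)^max e_{i₁}^max t`. -/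
def DemReach (n : ℕ) (lam : ℕ → ℕ) (eKop : ℕ → Filling → Option Filling) :
    List ℕ → Filling → Filling → Prop
  | [], t, u => t = u
  | i :: rest, t, u => ∃ t2, DemStep n lam eKop i t t2 ∧ DemReach n lam eKop rest t2 u

/-- The minimal highest weight tableau `u_λ`, whose row `r` boxes are all `{r+1}`. -/
def uTab (lam : ℕ → ℕ) : Filling := fun r c => if c < lam r then {r + 1} else ∅

/-- The K-Demazure crystal associated with a word `[i₁,…,iℓ]`. -/
def KDem (n : ℕ) (lam : ℕ → ℕ) (eKop : ℕ → Filling → Option Filling) (word : List ℕ) :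
    Set Filling :=
  {t | IsSVT n lam t ∧ DemReach n lam eKop word t (uTab lam)}

/-! ### Permutations and reduced words -/

/-- The permutation `s_{i₁} ⋯ s_{iℓ}` of a word `[i₁,…,iℓ]`, where `s_i` swaps `i`, `i+1`. -/
def wordPerm (word : List ℕ) : Equiv.Perm ℕ :=
  (word.map fun i => Equiv.swap i (i + 1)).prod

/-- `word` is a reduced word for `w` in the Coxeter generators `s_1, …, s_{n-1}`. -/
def IsReducedWord (n : ℕ) (w : Equiv.Perm ℕ) (word : List ℕ) : Prop :=
  (∀ i ∈ word, 1 ≤ i ∧ i < n) ∧ wordPerm word = w ∧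
    ∀ word' : List ℕ, (∀ i ∈ word', 1 ≤ i ∧ i < n) → wordPerm word' = w →
      word.length ≤ word'.length

/-- The Coxeter length of a permutation of `{1,…,n}`. -/
def permLength (n : ℕ) (σ : Equiv.Perm ℕ) : ℕ :=
  sInf {l | ∃ word : List ℕ, (∀ i ∈ word, 1 ≤ i ∧ i < n) ∧ wordPerm word = σ ∧
    word.length = l}

/-- The parabolic subgroup generated by `s_2, …, s_{n-1}`. -/
def parabolic (n : ℕ) : Subgroup (Equiv.Perm ℕ) :=
  Subgroup.closure {σ | ∃ i, 2 ≤ i ∧ i < n ∧ σ = Equiv.swap i (i + 1)}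

/-! ### Polynomials -/

/-- Polynomials in `x₁, x₂, …` over `ℤ[β]`; the variable `β` is `Polynomial.X`. -/
abbrev KPoly : Type := MvPolynomial ℕ (Polynomial ℤ)

/-- The scalar `β`. -/
def betaP : KPoly := MvPolynomial.C Polynomial.X

/-- The monomial `x^{wt(T)} = x₁^{wt₁} ⋯ xₙ^{wtₙ}`. -/
def xwt (n : ℕ) (lam : ℕ → ℕ) (t : Filling) : KPoly :=
  ∏ j ∈ Finset.Icc 1 n, (MvPolynomial.X j : KPoly) ^ wt n lam t j

/-- The β-character `∑_{T ∈ S} β^{excess T} x^{wt T}` of a set of tableaux. -/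
def charSet (n : ℕ) (lam : ℕ → ℕ) (S : Set Filling) : KPoly :=
  ∑ᶠ t ∈ S, betaP ^ excess n lam t * xwt n lam t

/-- The symmetric Grothendieck polynomial `𝔊_λ(x₁,…,xₙ; β)`. -/
def Groth (n : ℕ) (lam : ℕ → ℕ) : KPoly :=
  charSet n lam {t | IsSVT n lam t}

/-- The Schur polynomial `s_μ(x₁,…,xₙ)`. -/
def SchurP (n : ℕ) (mu : ℕ → ℕ) : KPoly :=
  ∑ᶠ t ∈ {t : Filling | IsSSYT n mu t}, xwt n mu t

/-- The numerator defining the Demazure–Lascoux operator `ϖ_i`. -/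
def DLnum (i : ℕ) (f : KPoly) : KPoly :=
  (MvPolynomial.X i + betaP * MvPolynomial.X i * MvPolynomial.X (i + 1)) * f -
    (MvPolynomial.X (i + 1) + betaP * MvPolynomial.X i * MvPolynomial.X (i + 1)) *
      (MvPolynomial.rename (Equiv.swap i (i + 1)) f)

/-- `DL` implements the Demazure–Lascoux operators `ϖ_i` for `1 ≤ i < n`:
`(x_i - x_{i+1}) · ϖ_i f` equals the defining numerator. -/
def IsDLOp (n : ℕ) (DL : ℕ → KPoly → KPoly) : Prop :=
  ∀ i, 1 ≤ i → i < n → ∀ f : KPoly,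
    (MvPolynomial.X i - MvPolynomial.X (i + 1)) * DL i f = DLnum i f

/-- `applyDL DL [i₁,…,iℓ] f = ϖ_{i₁} ϖ_{i₂} ⋯ ϖ_{iℓ} f`. -/
def applyDL (DL : ℕ → KPoly → KPoly) : List ℕ → KPoly → KPoly
  | [], f => f
  | i :: rest, f => DL i (applyDL DL rest f)


/-! ### Maximal iteration -/

theorem iterOpt_succ' (g : Filling → Option Filling) (m : ℕ) (t : Filling) :
    iterOpt g (m + 1) t = (g t).bind (iterOpt g m) := by
  induction m generalizing t with
  | zero => cases h : g t <;> simp [iterOpt, h]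
  | succ m ih =>
    change (iterOpt g (m + 1) t).bind g = _
    rw [ih]
    cases g t <;> rfl

theorem MaxApply.unique {g : Filling → Option Filling} {t t₁ t₂ : Filling}
    (h₁ : MaxApply g t t₁) (h₂ : MaxApply g t t₂) : t₁ = t₂ := by
  obtain ⟨⟨m₁, hm₁⟩, hstop₁⟩ := h₁
  obtain ⟨⟨m₂, hm₂⟩, hstop₂⟩ := h₂
  induction m₁ generalizing t m₂ with
  | zero =>
    cases Option.some.inj hm₁
    cases m₂ with
    | zero => exact Option.some.inj hm₂
    | succ m₂ => simp [iterOpt_succ', hstop₁] at hm₂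
  | succ m₁ ih =>
    rw [iterOpt_succ'] at hm₁
    cases hg : g t with
    | none => simp [hg] at hm₁
    | some s =>
      cases m₂ with
      | zero => cases Option.some.inj hm₂; simp [hstop₂] at hg
      | succ m₂ =>
        rw [iterOpt_succ', hg] at hm₂
        rw [hg] at hm₁
        exact ih hm₁ m₂ hm₂

theorem exists_maxApply (g : Filling → Option Filling) (μ : Filling → ℕ)
    (P : Filling → Prop)
    (hg : ∀ t t', P t → g t = some t' → P t' ∧ μ t' < μ t) {t : Filling} (ht : P t) :
    ∃ t', MaxApply g t t' ∧ P t' := by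
  induction hμ : μ t using Nat.strong_induction_on generalizing t with
  | _ N ih =>
    cases hgt : g t with
    | none => exact ⟨t, ⟨⟨0, rfl⟩, hgt⟩, ht⟩
    | some s =>
      obtain ⟨hs, hlt⟩ := hg t s ht hgt
      obtain ⟨t', ⟨⟨m, hm⟩, hstop⟩, ht'⟩ := ih (μ s) (hμ ▸ hlt) hs rfl
      exact ⟨t', ⟨⟨m + 1, by rw [iterOpt_succ', hgt]; exact hm⟩, hstop⟩, ht'⟩

/-! ### Words, supports and inversions -/

theorem wordPerm_cons (i : ℕ) (l : List ℕ) :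
    wordPerm (i :: l) = Equiv.swap i (i + 1) * wordPerm l := List.prod_cons

theorem wordPerm_append (l₁ l₂ : List ℕ) :
    wordPerm (l₁ ++ l₂) = wordPerm l₁ * wordPerm l₂ := by
  simp [wordPerm]

theorem wordPerm_reverse (l : List ℕ) : wordPerm l.reverse = (wordPerm l)⁻¹ := by
  simp [wordPerm, List.prod_inv_reverse, List.map_reverse, Function.comp_def]

theorem wordPerm_apply_le (l : List ℕ) (x : ℕ) : wordPerm l x ≤ x + l.length := by
  induction l with
  | nil => simp [wordPerm]
  | cons i l ih =>
    rw [wordPerm_cons, Equiv.Perm.mul_apply, Equiv.swap_apply_def, List.length_cons]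
    split_ifs <;> omega

def SupportedIn (m n : ℕ) (u : Equiv.Perm ℕ) : Prop := ∀ x, u x ≠ x → m ≤ x ∧ x ≤ n

namespace SupportedIn

variable {m n : ℕ} {u v : Equiv.Perm ℕ}

theorem apply_mem (hu : SupportedIn m n u) {x : ℕ} (hx : u x ≠ x) : m ≤ u x ∧ u x ≤ n :=
  hu (u x) fun h => hx (u.injective h)

theorem apply_mem_of_mem (hu : SupportedIn m n u) {x : ℕ} (hx : m ≤ x ∧ x ≤ n) :
    m ≤ u x ∧ u x ≤ n := by
  by_cases h : u x = x
  · rwa [h]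
  · exact hu.apply_mem h

theorem le_apply (hu : SupportedIn m n u) {x : ℕ} (hx : m ≤ x) : m ≤ u x := by
  by_cases h : u x = x
  · rwa [h]
  · exact (hu.apply_mem h).1

theorem apply_eq_self (hu : SupportedIn m n u) {x : ℕ} (hx : x < m) : u x = x := by
  by_contra h
  have := hu x h
  omega

theorem inv (hu : SupportedIn m n u) : SupportedIn m n u⁻¹ := fun x hx => by
  simpa using hu.apply_mem (x := u⁻¹ x) (by simpa using hx.symm)

theorem mul (hu : SupportedIn m n u) (hv : SupportedIn m n v) : SupportedIn m n (u * v) :=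
  fun x hx => by
    by_cases h : v x = x
    · exact hu x (by rwa [Equiv.Perm.mul_apply, h] at hx)
    · exact hv x h

theorem of_apply_eq_self (hu : SupportedIn m n u) (hm : u m = m) : SupportedIn (m + 1) n u :=
  fun x hx => by
    have := hu x hx
    have : x ≠ m := by rintro rfl; exact hx hm
    omega

end SupportedIn

theorem supportedIn_swap {m n i : ℕ} (hmi : m ≤ i) (hin : i < n) :
    SupportedIn m n (Equiv.swap i (i + 1)) := fun x hx => by
  by_contra h
  exact hx (Equiv.swap_apply_of_ne_of_ne (by omega) (by omega))

theorem supportedIn_wordPerm {m n : ℕ} {l : List ℕ} (hl : ∀ i ∈ l, m ≤ i ∧ i < n) :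
    SupportedIn m n (wordPerm l) := by
  induction l with
  | nil => intro x hx; exact absurd rfl hx
  | cons i l ih =>
    rw [wordPerm_cons]
    have hi := hl i List.mem_cons_self
    exact (supportedIn_swap hi.1 hi.2).mul (ih fun j hj => hl j (List.mem_cons_of_mem i hj))

def inversions (n : ℕ) (u : Equiv.Perm ℕ) : Finset (ℕ × ℕ) :=
  (Finset.Icc 1 n ×ˢ Finset.Icc 1 n).filter fun p => p.1 < p.2 ∧ u p.2 < u p.1

theorem mem_inversions {n : ℕ} {u : Equiv.Perm ℕ} {a b : ℕ} :
    (a, b) ∈ inversions n u ↔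
      (1 ≤ a ∧ a ≤ n) ∧ (1 ≤ b ∧ b ≤ n) ∧ a < b ∧ u b < u a := by
  simp [inversions, and_assoc]

theorem inversions_one (n : ℕ) : inversions n 1 = ∅ :=
  Finset.filter_false_of_mem fun p _ h => by simp at h; omega

theorem inversions_swap_mul {n i : ℕ} {u : Equiv.Perm ℕ}
    (ha : 1 ≤ u⁻¹ i ∧ u⁻¹ i ≤ n) (hb : 1 ≤ u⁻¹ (i + 1) ∧ u⁻¹ (i + 1) ≤ n)
    (hlt : u⁻¹ i < u⁻¹ (i + 1)) :
    inversions n (Equiv.swap i (i + 1) * u) =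
      insert (u⁻¹ i, u⁻¹ (i + 1)) (inversions n u) := by
  ext ⟨a, b⟩
  have key : ∀ x, (x = u⁻¹ i ↔ u x = i) ∧ (x = u⁻¹ (i + 1) ↔ u x = i + 1) := fun x =>
    ⟨Equiv.Perm.eq_inv_iff_eq, Equiv.Perm.eq_inv_iff_eq⟩
  have := key a
  have := key b
  simp only [Finset.mem_insert, mem_inversions, Prod.mk.injEq, Equiv.Perm.mul_apply,
    Equiv.swap_apply_def]
  split_ifs <;> omega

def numInversions (n : ℕ) (u : Equiv.Perm ℕ) : ℕ := (inversions n u).card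

section Inversions

variable {n i : ℕ} {u : Equiv.Perm ℕ}

theorem numInversions_swap_mul_of_lt (hu : SupportedIn 1 n u) (hi : 1 ≤ i) (hin : i < n)
    (hlt : u⁻¹ i < u⁻¹ (i + 1)) :
    numInversions n (Equiv.swap i (i + 1) * u) = numInversions n u + 1 := by
  rw [numInversions, inversions_swap_mul (hu.inv.apply_mem_of_mem ⟨hi, hin.le⟩)
    (hu.inv.apply_mem_of_mem ⟨by omega, hin⟩) hlt, Finset.card_insert_of_notMem]
  · rfl
  · simp [mem_inversions]

theorem numInversions_swap_mul_of_gt (hu : SupportedIn 1 n u) (hi : 1 ≤ i) (hin : i < n)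
    (hgt : u⁻¹ (i + 1) < u⁻¹ i) :
    numInversions n (Equiv.swap i (i + 1) * u) + 1 = numInversions n u := by
  have h := numInversions_swap_mul_of_lt ((supportedIn_swap hi hin).mul hu) hi hin
    (by simpa [Equiv.swap_apply_of_ne_of_ne] using hgt)
  rwa [← mul_assoc, Equiv.swap_mul_self, one_mul, eq_comm] at h

theorem numInversions_swap_mul_le (hu : SupportedIn 1 n u) (hi : 1 ≤ i) (hin : i < n) :
    numInversions n (Equiv.swap i (i + 1) * u) ≤ numInversions n u + 1 := by
  rcases lt_or_gt_of_ne (u⁻¹.injective.ne (show i ≠ i + 1 by omega)) with h | h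
  · exact (numInversions_swap_mul_of_lt hu hi hin h).le
  · have := numInversions_swap_mul_of_gt hu hi hin h
    omega

theorem numInversions_wordPerm_le {l : List ℕ} (hl : ∀ i ∈ l, 1 ≤ i ∧ i < n) :
    numInversions n (wordPerm l) ≤ l.length := by
  induction l with
  | nil => simp [wordPerm, numInversions, inversions_one]
  | cons i l ih =>
    have hl' : ∀ j ∈ l, 1 ≤ j ∧ j < n := fun j hj => hl j (List.mem_cons_of_mem i hj)
    have hi := hl i List.mem_cons_self
    rw [wordPerm_cons, List.length_cons]
    have := numInversions_swap_mul_le (supportedIn_wordPerm hl') hi.1 hi.2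
    have := ih hl'
    omega

end Inversions

theorem SupportedIn.exists_descent {m n : ℕ} {u : Equiv.Perm ℕ} (hu : SupportedIn m n u)
    (hne : u ≠ 1) : ∃ i, m ≤ i ∧ i < n ∧ u⁻¹ (i + 1) < u⁻¹ i := by
  set v := u⁻¹
  have hv : SupportedIn m n v := hu.inv
  by_contra! hmono
  have hmoved : ∃ x, v x ≠ x := by
    by_contra! h
    exact hne (inv_eq_one.mp (Equiv.ext h))
  -- the least point moved by `v` is sent up by `v`, yet `v` is monotone from there on
  set x := Nat.find hmoved
  have hx : v x ≠ x := Nat.find_spec hmoved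
  have hfix : ∀ y < x, v y = y := fun y hy => not_not.mp (Nat.find_min hmoved hy)
  have hmx := hv x hx
  have hvx : x < v x := by
    by_contra! h
    exact hx (v.injective (hfix _ (lt_of_le_of_ne h hx)))
  have hux : v (u x) = x := by simp [v]
  have hxu : x < u x := by
    have h₁ : u x ≠ x := fun h => hx (by simpa [h] using hux)
    have h₂ : ¬u x < x := fun h => h₁ (by rw [← hfix _ h, hux])
    omega
  have hun : u x ≤ n := (hv (u x) (by rw [hux]; omega)).2
  have hvmono : MonotoneOn v (Set.Icc m n) :=
    monotoneOn_of_le_succ Set.ordConnected_Icc fun a _ ha ha₁ => by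
      simp only [Order.succ_eq_add_one, Set.mem_Icc] at ha ha₁ ⊢
      exact hmono a ha.1 (by omega)
  have := hvmono ⟨hmx.1, hmx.2⟩ ⟨by omega, hun⟩ hxu.le
  rw [hux] at this
  omega

theorem SupportedIn.exists_word {m n : ℕ} (hm : 1 ≤ m) {u : Equiv.Perm ℕ}
    (hu : SupportedIn m n u) :
    ∃ l, (∀ i ∈ l, m ≤ i ∧ i < n) ∧ wordPerm l = u ∧
      l.length = numInversions n u := by
  have hu₁ : SupportedIn 1 n u := fun x hx => by have := hu x hx; omega
  induction hN : numInversions n u using Nat.strong_induction_on generalizing u with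
  | _ N ih =>
    by_cases h1 : u = 1
    · subst h1
      exact ⟨[], by simp, rfl, by simp [← hN, numInversions, inversions_one]⟩
    obtain ⟨i, hmi, hin, hdesc⟩ := hu.exists_descent h1
    have hcount := numInversions_swap_mul_of_gt hu₁ (by omega) hin hdesc
    have hsu := (supportedIn_swap hmi hin).mul hu
    obtain ⟨l, hl, hlu, hlen⟩ :=
      ih _ (by omega) hsu ((supportedIn_swap (by omega) hin).mul hu₁) rfl
    refine ⟨i :: l, ?_, ?_, by simp [hlen]; omega⟩
    · simpa [hmi, hin] using hl
    · rw [wordPerm_cons, hlu, ← mul_assoc, Equiv.swap_mul_self, one_mul]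

namespace IsReducedWord

variable {n : ℕ} {w : Equiv.Perm ℕ} {i : ℕ} {word rest : List ℕ}

theorem length_eq_numInversions (h : IsReducedWord n w word) : word.length = numInversions n w := by
  obtain ⟨hl, hw, hmin⟩ := h
  obtain ⟨l, hl', hlw, hlen⟩ :=
    (hw ▸ supportedIn_wordPerm hl : SupportedIn 1 n w).exists_word le_rfl
  have := hmin l hl' hlw
  have := hw ▸ numInversions_wordPerm_le hl
  omega

theorem tail (h : IsReducedWord n w (i :: rest)) : IsReducedWord n (wordPerm rest) rest := by
  obtain ⟨hl, hw, hmin⟩ := h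
  refine ⟨fun j hj => hl j (List.mem_cons_of_mem i hj), rfl, fun l hl' hlw => ?_⟩
  have := hmin (i :: l) (by simpa [hl i List.mem_cons_self] using hl')
    (by rw [← hw, wordPerm_cons, wordPerm_cons, hlw])
  simpa using this

theorem inv_apply_lt (h : IsReducedWord n w (i :: rest)) :
    (wordPerm rest)⁻¹ i < (wordPerm rest)⁻¹ (i + 1) := by
  have hi := h.1 i List.mem_cons_self
  have hrest := h.tail
  by_contra! hge
  have hgt := lt_of_le_of_ne hge ((wordPerm rest)⁻¹.injective.ne (by omega))
  have := numInversions_swap_mul_of_gt (supportedIn_wordPerm hrest.1) hi.1 hi.2 hgt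
  rw [← wordPerm_cons, h.2.1, ← hrest.length_eq_numInversions, ← h.length_eq_numInversions,
    List.length_cons] at this
  omega

theorem tail_apply_one_ne (h : IsReducedWord n w (i :: rest)) : wordPerm rest 1 ≠ i + 1 := by
  intro h1
  have hi := h.1 i List.mem_cons_self
  have hlt := h.inv_apply_lt
  rw [Equiv.Perm.inv_eq_iff_eq.mpr h1.symm] at hlt
  have h0 : (wordPerm rest)⁻¹ i ≠ i := by omega
  have := (supportedIn_wordPerm h.tail.1).inv.apply_mem h0
  omega

end IsReducedWord

/-! ### Lowering entries -/

def lowerEntry (i a : ℕ) : ℕ := if a = i + 1 then i else a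

def lowerWord : List ℕ → ℕ → ℕ
  | [], a => a
  | i :: rest, a => lowerWord rest (lowerEntry i a)

theorem monotone_lowerEntry (i : ℕ) : Monotone (lowerEntry i) := fun a b hab => by
  unfold lowerEntry
  split_ifs <;> omega

theorem lowerEntry_mem_Icc_iff {i x a : ℕ} (hi : 1 ≤ i) (hx : x ≠ i + 1) :
    (1 ≤ lowerEntry i a ∧ lowerEntry i a ≤ x) ↔
      (1 ≤ a ∧ a ≤ Equiv.swap i (i + 1) x) := by
  unfold lowerEntry
  rw [Equiv.swap_apply_def]
  split_ifs <;> omega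

theorem IsReducedWord.lowerWord_eq_one_iff {n : ℕ} {w : Equiv.Perm ℕ} {word : List ℕ}
    (h : IsReducedWord n w word) (a : ℕ) : lowerWord word a = 1 ↔ 1 ≤ a ∧ a ≤ w 1 := by
  induction word generalizing w a with
  | nil =>
    rw [← h.2.1]
    simp only [lowerWord, wordPerm, List.map_nil, List.prod_nil, Equiv.Perm.one_apply]
    omega
  | cons i rest ih =>
    have hi := h.1 i List.mem_cons_self
    have hw1 : w 1 = Equiv.swap i (i + 1) (wordPerm rest 1) := by
      rw [← h.2.1, wordPerm_cons, Equiv.Perm.mul_apply]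
    rw [lowerWord, ih h.tail, lowerEntry_mem_Icc_iff hi.1 h.tail_apply_one_ne, hw1]

theorem mem_image_lowerEntry {i x : ℕ} {S : Finset ℕ} :
    x ∈ S.image (lowerEntry i) ↔
      (x = i ∧ (i ∈ S ∨ i + 1 ∈ S)) ∨ (x ≠ i ∧ x ≠ i + 1 ∧ x ∈ S) := by
  simp only [Finset.mem_image, lowerEntry]
  constructor
  · rintro ⟨a, ha, rfl⟩
    split_ifs with h
    · exact Or.inl ⟨rfl, Or.inr (h ▸ ha)⟩
    · by_cases hai : a = i
      · exact Or.inl ⟨hai, Or.inl (hai ▸ ha)⟩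
      · exact Or.inr ⟨hai, h, ha⟩
  · rintro (⟨rfl, hx | hx⟩ | ⟨hx, hx₁, hxS⟩)
    · exact ⟨x, hx, by simp⟩
    · exact ⟨x + 1, hx, by simp⟩
    · exact ⟨x, hxS, by simp [hx₁]⟩

theorem image_lowerEntry_erase {i : ℕ} {S : Finset ℕ} (hi : i ∈ S) :
    (S.erase (i + 1)).image (lowerEntry i) = S.image (lowerEntry i) := by
  ext x
  simp only [mem_image_lowerEntry, Finset.mem_erase]
  grind

theorem image_lowerEntry_insert {i : ℕ} {S : Finset ℕ} (hi₁ : i + 1 ∈ S) :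
    (insert i S).image (lowerEntry i) = S.image (lowerEntry i) := by
  ext x
  simp only [mem_image_lowerEntry, Finset.mem_insert]
  grind

theorem image_lowerEntry_insert_erase {i : ℕ} {S : Finset ℕ} (hi₁ : i + 1 ∈ S) :
    (insert i (S.erase (i + 1))).image (lowerEntry i) = S.image (lowerEntry i) := by
  ext x
  simp only [mem_image_lowerEntry, Finset.mem_insert, Finset.mem_erase]
  grind

theorem image_lowerEntry_of_notMem {i : ℕ} {S : Finset ℕ} (hi₁ : i + 1 ∉ S) :
    S.image (lowerEntry i) = S := by
  ext x
  simp only [mem_image_lowerEntry]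
  grind

/-! ### Crystal operators on one-row tableaux -/

/-- The part of `IsSVT n (rowShape k)` that `e_i` and `e_i^K` use and preserve. -/
structure IsRowTableau (k : ℕ) (t : Filling) : Prop where
  eq_empty : ∀ r c, ¬(r = 0 ∧ c < k) → t r c = ∅
  nonempty : ∀ c < k, (t 0 c).Nonempty
  sorted : ∀ c c' a b, c < c' → a ∈ t 0 c → b ∈ t 0 c' → a ≤ b

def mapEntries (f : ℕ → ℕ) (t : Filling) : Filling := fun r c => (t r c).image f

theorem mapEntries_mapEntries (f g : ℕ → ℕ) (t : Filling) :
    mapEntries g (mapEntries f t) = mapEntries (g ∘ f) t := by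
  funext r c
  exact Finset.image_image

theorem IsSVT.isRowTableau {n k : ℕ} {t : Filling} (h : IsSVT n (rowShape k) t) :
    IsRowTableau k t where
  eq_empty r c hrc := h.emptyOutside r c (by unfold rowShape; split_ifs <;> omega)
  nonempty c hc := h.boxNonempty 0 c hc
  sorted c c' a b hcc' ha := by
    induction c', hcc' using Nat.le_induction generalizing b with
    | base => exact h.rowWeak 0 c a b ha
    | succ c' hcc' ih =>
      intro hb
      have hc' : c' < k := by
        by_contra hc'
        rw [h.emptyOutside 0 (c' + 1) (by simp [rowShape]; omega)] at hb
        simp at hb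
      obtain ⟨x, hx⟩ := h.boxNonempty 0 c' hc'
      exact (ih x hx).trans (h.rowWeak 0 c' x b hx hb)

theorem mapEntries_updateBox_of_image_eq {f : ℕ → ℕ} {t : Filling} {r c : ℕ}
    {A : Finset ℕ} (h : A.image f = (t r c).image f) :
    mapEntries f (updateBox t r c A) = mapEntries f t := by
  funext r' c'
  unfold mapEntries updateBox
  split_ifs with e
  · rw [e.1, e.2, h]
  · rfl

theorem wt_updateBox_of_mem_iff {n : ℕ} {lam : ℕ → ℕ} {t : Filling} {r c a : ℕ}
    {A : Finset ℕ} (h : a ∈ A ↔ a ∈ t r c) :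
    wt n lam (updateBox t r c A) a = wt n lam t a := by
  unfold wt
  congr 1
  refine Finset.filter_congr fun p _ => ?_
  unfold updateBox
  split_ifs with e
  · rw [e.1, e.2, h]
  · rfl

theorem wt_updateBox_lt {n : ℕ} {lam : ℕ → ℕ} {t : Filling} {r c a : ℕ} {A : Finset ℕ}
    (hr : r < n) (hc : c < lam 0) (ha : a ∈ t r c) (hA : a ∉ A) :
    wt n lam (updateBox t r c A) a < wt n lam t a := by
  have hsub : ∀ r' c', a ∈ updateBox t r c A r' c' → a ∈ t r' c' := by
    intro r' c' h
    unfold updateBox at h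
    split_ifs at h with e
    · exact absurd h hA
    · exact h
  apply Finset.card_lt_card
  rw [Finset.ssubset_iff_of_subset (Finset.monotone_filter_right _ fun p _ => hsub p.1 p.2)]
  exact ⟨(r, c), by simp [hr, hc, ha],
    fun h => hA (by simpa [updateBox] using (Finset.mem_filter.1 h).2)⟩

theorem pctr_eq_zero {w : List Bool} (hw : ∀ b ∈ w, b = false) : pctr w = 0 := by
  induction w with
  | nil => rfl
  | cons b w ih =>
    obtain rfl := hw b List.mem_cons_self
    change pctr w - 1 = 0
    rw [ih fun b hb => hw b (List.mem_cons_of_mem _ hb)]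

section Operators

variable {n k i : ℕ} {t t' : Filling}

theorem eK_eq_none_iff (hn : 0 < n) :
    eK n (rowShape k) i t = none ↔ ∀ c < k, i ∈ t 0 c → i + 1 ∉ t 0 c := by
  rw [eK]
  split_ifs with h
  · simp only [false_iff]
    obtain ⟨⟨r, c⟩, hr, hc, hi, hi₁⟩ := h
    rcases Nat.eq_zero_or_pos r with rfl | hr0
    · exact fun hno => hno c hc hi hi₁
    · simp [rowShape, hr0.ne'] at hc
  · simp only [true_iff]
    exact fun c hc hi hi₁ => h ⟨(0, c), hn, hc, hi, hi₁⟩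

theorem eK_eq_some (h : eK n (rowShape k) i t = some t') :
    ∃ c < k, i ∈ t 0 c ∧ i + 1 ∈ t 0 c ∧
      t' = updateBox t 0 c ((t 0 c).erase (i + 1)) := by
  rw [eK] at h
  split_ifs at h with hp
  obtain ⟨hr, hc, hi, hi₁⟩ := Classical.choose_spec hp
  cases h
  generalize Classical.choose hp = p at *
  obtain ⟨r, c⟩ := p
  rcases Nat.eq_zero_or_pos r with rfl | hr0
  · exact ⟨c, hc, hi, hi₁, rfl⟩
  · simp [rowShape, hr0.ne'] at hc

end Operators

namespace IsRowTableau

variable {n k i c : ℕ} {t t' u : Filling}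

theorem row_eq_zero (ht : IsRowTableau k t) {r a : ℕ} (ha : a ∈ t r c) : r = 0 ∧ c < k := by
  by_contra h
  simp [ht.eq_empty r c h] at ha

theorem map (ht : IsRowTableau k t) {f : ℕ → ℕ} (hf : Monotone f) :
    IsRowTableau k (mapEntries f t) where
  eq_empty r c h := by simp [mapEntries, ht.eq_empty r c h]
  nonempty c hc := (ht.nonempty c hc).image f
  sorted c c' a b hcc' ha hb := by
    simp only [mapEntries, Finset.mem_image] at ha hb
    obtain ⟨a, ha, rfl⟩ := ha
    obtain ⟨b, hb, rfl⟩ := hb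
    exact hf (ht.sorted c c' a b hcc' ha hb)

theorem update (ht : IsRowTableau k t) {A : Finset ℕ} (hc : c < k) (hA : A.Nonempty)
    (hleft : ∀ c' < c, ∀ a ∈ t 0 c', ∀ b ∈ A, a ≤ b)
    (hright : ∀ c', c < c' → ∀ a ∈ A, ∀ b ∈ t 0 c', a ≤ b) :
    IsRowTableau k (updateBox t 0 c A) where
  eq_empty r c' h := by
    rw [updateBox, if_neg (by rintro ⟨rfl, rfl⟩; exact h ⟨rfl, hc⟩)]
    exact ht.eq_empty r c' h
  nonempty c' hc' := by
    unfold updateBox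
    split_ifs
    exacts [hA, ht.nonempty c' hc']
  sorted c₁ c₂ a b h₁₂ ha hb := by
    unfold updateBox at ha hb
    simp only [true_and] at ha hb
    split_ifs at ha hb with e₁ e₂ e₂ <;> subst_vars
    · omega
    · exact hright c₂ h₁₂ a ha b hb
    · exact hleft c₁ h₁₂ a ha b hb
    · exact ht.sorted c₁ c₂ a b h₁₂ ha hb

theorem update_of_subset (ht : IsRowTableau k t) {A : Finset ℕ} (hc : c < k)
    (hA : A.Nonempty) (hsub : A ⊆ t 0 c) : IsRowTableau k (updateBox t 0 c A) :=
  ht.update hc hA (fun c' h a ha b hb => ht.sorted c' c a b h ha (hsub hb))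
    (fun c' h a ha b hb => ht.sorted c c' a b h (hsub ha) hb)

theorem update_erase_insert (ht : IsRowTableau k t) (hc : c + 1 < k) (hi : i ∈ t 0 c)
    (hi₁ : i + 1 ∈ t 0 (c + 1)) :
    IsRowTableau k (updateBox (updateBox t 0 c ((t 0 c).erase (i + 1)))
      0 (c + 1) (insert i (t 0 (c + 1)))) := by
  have ht' := ht.update_of_subset (c := c) (by omega)
    ⟨i, Finset.mem_erase.2 ⟨by omega, hi⟩⟩ (Finset.erase_subset (i + 1) _)
  refine ht'.update hc (Finset.insert_nonempty _ _) (fun c' hc' a ha b hb => ?_)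
    (fun c' hc' a ha b hb => ?_)
  · simp only [updateBox, true_and] at ha
    rcases Finset.mem_insert.1 hb with rfl | hb
    · split_ifs at ha with h
      · subst h
        have := ht.sorted c' (c' + 1) a (b + 1) (by omega) (Finset.mem_of_mem_erase ha) hi₁
        have := Finset.ne_of_mem_erase ha
        omega
      · exact ht.sorted c' c a b (by omega) ha hi
    · split_ifs at ha with h
      · subst h
        exact ht.sorted c' (c' + 1) a b hc' (Finset.mem_of_mem_erase ha) hb
      · exact ht.sorted c' (c + 1) a b hc' ha hb
  · simp only [updateBox, true_and, if_neg (show c' ≠ c by omega)] at hb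
    rcases Finset.mem_insert.1 ha with rfl | ha
    · have := ht.sorted (c + 1) c' (a + 1) b hc' hi₁ hb
      omega
    · exact ht.sorted (c + 1) c' a b hc' ha hb

theorem update_insert_erase (ht : IsRowTableau k t) (hc : c < k) (hi₁ : i + 1 ∈ t 0 c)
    (hleft : ∀ c', c' + 1 = c → i + 1 ∉ t 0 c') :
    IsRowTableau k (updateBox t 0 c (insert i ((t 0 c).erase (i + 1)))) := by
  refine ht.update hc (Finset.insert_nonempty _ _) (fun c' hc' a ha b hb => ?_)
    (fun c' hc' a ha b hb => ?_)
  · rcases Finset.mem_insert.1 hb with rfl | hb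
    · have := ht.sorted c' c a (b + 1) hc' ha hi₁
      suffices a ≠ b + 1 by omega
      rintro rfl
      -- the box left of `c` would be squeezed between two entries `i + 1`
      obtain ⟨x, hx⟩ := ht.nonempty (c - 1) (by omega)
      rcases (show c' = c - 1 ∨ c' < c - 1 by omega) with h | h
      · exact hleft c' (by omega) ha
      · have := ht.sorted c' (c - 1) _ x h ha hx
        have := ht.sorted (c - 1) c x _ (by omega) hx hi₁
        exact hleft (c - 1) (by omega) (by rwa [show x = b + 1 by omega] at hx)
    · exact ht.sorted c' c a b hc' ha (Finset.mem_of_mem_erase hb)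
  · rcases Finset.mem_insert.1 ha with rfl | ha
    · have := ht.sorted c c' (a + 1) b hc' hi₁ hb
      omega
    · exact ht.sorted c c' a b hc' (Finset.mem_of_mem_erase ha) hb

theorem colHas_iff (ht : IsRowTableau k t) (hn : 0 < n) {a : ℕ} :
    colHas n t a c ↔ a ∈ t 0 c :=
  ⟨fun ⟨_, _, h⟩ => (ht.row_eq_zero h).1 ▸ h, fun h => ⟨0, hn, h⟩⟩

theorem colSign_eq_some_true (ht : IsRowTableau k t) (hn : 0 < n) :
    colSign n t i c = some true ↔ i ∈ t 0 c ∧ i + 1 ∉ t 0 c := by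
  unfold colSign
  simp only [ht.colHas_iff hn]
  split_ifs <;> simp_all

theorem colSign_eq_some_false (ht : IsRowTableau k t) (hn : 0 < n) :
    colSign n t i c = some false ↔ i + 1 ∈ t 0 c ∧ i ∉ t 0 c := by
  unfold colSign
  simp only [ht.colHas_iff hn]
  split_ifs <;> simp_all

theorem minusCol_iff (ht : IsRowTableau k t) (hn : 0 < n) :
    MinusCol n k t i c ↔ c < k ∧ i + 1 ∈ t 0 c ∧ i ∉ t 0 c := by
  rw [MinusCol, ht.colSign_eq_some_false hn]
  refine ⟨fun h => ⟨h.1, h.2.1⟩, fun h => ⟨h.1, h.2, pctr_eq_zero fun b hb => ?_⟩⟩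
  -- no column right of an `i + 1` can contain `i`
  obtain ⟨c', hc', hsign⟩ := List.mem_filterMap.1 hb
  rw [List.range_eq_range', List.drop_range', List.mem_range'_1] at hc'
  cases b
  · rfl
  · have := ht.sorted c c' (i + 1) i (by omega) h.2.1 ((ht.colSign_eq_some_true hn).1 hsign).1
    omega

theorem eRaw_eq_none_iff (ht : IsRowTableau k t) (hin : i < n) :
    eRaw n (rowShape k) i t = none ↔ ∀ c < k, i + 1 ∈ t 0 c → i ∈ t 0 c := by
  have hn : 0 < n := by omega
  constructor
  · intro h c hc hi₁
    by_contra hi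
    have hminus : ∃ c, MinusCol n k t i c := ⟨c, (ht.minusCol_iff hn).2 ⟨hc, hi₁, hi⟩⟩
    have hcol : ∃ c, eBoxCol n (rowShape k 0) t i c :=
      ⟨Nat.find hminus, Nat.find_spec hminus, fun c' hc' => Nat.find_min' hminus hc'⟩
    have hrow : ∃ r, r < n ∧ i + 1 ∈ t r (Classical.choose hcol) :=
      ⟨0, hn, ((ht.minusCol_iff hn).1 (Classical.choose_spec hcol).1).2.1⟩
    rw [eRaw, dif_pos hcol, dif_pos hrow] at h
    dsimp only at h
    split_ifs at h
  · intro h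
    rw [eRaw, dif_neg]
    rintro ⟨c, hc, -⟩
    obtain ⟨hck, hi₁, hi⟩ := (ht.minusCol_iff hn).1 hc
    exact hi (h c hck hi₁)

theorem eRaw_eq_some (ht : IsRowTableau k t) (hin : i < n)
    (h : eRaw n (rowShape k) i t = some t') :
    (∃ c, c + 1 < k ∧ i ∈ t 0 c ∧ i + 1 ∈ t 0 c ∧ i + 1 ∈ t 0 (c + 1) ∧
      t' = updateBox (updateBox t 0 c ((t 0 c).erase (i + 1))) 0 (c + 1)
        (insert i (t 0 (c + 1)))) ∨
    (∃ c, c < k ∧ i + 1 ∈ t 0 c ∧ (∀ c', c' + 1 = c → i + 1 ∉ t 0 c') ∧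
      t' = updateBox t 0 c (insert i ((t 0 c).erase (i + 1)))) := by
  have hn : 0 < n := by omega
  have hcol : ∃ c, eBoxCol n (rowShape k 0) t i c := by
    by_contra hcol
    rw [eRaw, dif_neg hcol] at h
    cases h
  have hrow : ∃ r, r < n ∧ i + 1 ∈ t r (Classical.choose hcol) := by
    by_contra hrow
    rw [eRaw, dif_pos hcol, dif_neg hrow] at h
    cases h
  rw [eRaw, dif_pos hcol, dif_pos hrow] at h
  dsimp only at h
  obtain ⟨hminus, hmin⟩ := Classical.choose_spec hcol
  obtain ⟨hck, hi₁, -⟩ := (ht.minusCol_iff hn).1 hminus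
  rw [(ht.row_eq_zero (Classical.choose_spec hrow).2).1] at h
  clear hrow
  generalize Classical.choose hcol = c at *
  split_ifs at h with hcase <;> cases h
  · left
    obtain ⟨hc, hleft⟩ := hcase
    -- the box left of the first unpaired `i + 1` holds `i + 1`, hence is paired
    have hi : i ∈ t 0 (c - 1) := by
      by_contra hi
      have := hmin (c - 1) ((ht.minusCol_iff hn).2 ⟨by omega, hleft, hi⟩)
      omega
    refine ⟨c - 1, by omega, hi, hleft, ?_, ?_⟩ <;> rw [Nat.sub_add_cancel hc]
    exact hi₁
  · right
    exact ⟨c, hck, hi₁, fun c' hc' hc'₁ => hcase ⟨by omega, by rwa [← hc']⟩, rfl⟩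

theorem eRaw_spec (ht : IsRowTableau k t) (hin : i < n) (h : eRaw n (rowShape k) i t = some t') :
    IsRowTableau k t' ∧ mapEntries (lowerEntry i) t' = mapEntries (lowerEntry i) t ∧
      wt n (rowShape k) t' (i + 1) < wt n (rowShape k) t (i + 1) := by
  have hn : 0 < n := by omega
  rcases ht.eRaw_eq_some hin h with
    ⟨c, hc, hi, hi₁, hi₁', rfl⟩ | ⟨c, hc, hi₁, hleft, rfl⟩
  · have hbox : updateBox t 0 c ((t 0 c).erase (i + 1)) 0 (c + 1) = t 0 (c + 1) := by
      simp [updateBox]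
    refine ⟨ht.update_erase_insert hc hi hi₁', ?_, ?_⟩
    · rw [mapEntries_updateBox_of_image_eq (by rw [hbox, image_lowerEntry_insert hi₁']),
        mapEntries_updateBox_of_image_eq (image_lowerEntry_erase hi)]
    · rw [wt_updateBox_of_mem_iff (by simp [hbox])]
      exact wt_updateBox_lt hn (by simp [rowShape]; omega) hi₁ (by simp)
  · refine ⟨ht.update_insert_erase hc hi₁ hleft,
      mapEntries_updateBox_of_image_eq (image_lowerEntry_insert_erase hi₁),
      wt_updateBox_lt hn (by simpa [rowShape]) hi₁ (by simp)⟩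

theorem eK_spec (ht : IsRowTableau k t) (hin : i < n) (h : eK n (rowShape k) i t = some t') :
    IsRowTableau k t' ∧ mapEntries (lowerEntry i) t' = mapEntries (lowerEntry i) t ∧
      wt n (rowShape k) t' (i + 1) < wt n (rowShape k) t (i + 1) ∧
      ∀ c', i + 1 ∈ t' 0 c' → t' 0 c' = t 0 c' := by
  obtain ⟨c, hc, hi, hi₁, rfl⟩ := eK_eq_some h
  refine ⟨ht.update_of_subset hc ⟨i, by simp [hi]⟩ (Finset.erase_subset _ _),
    mapEntries_updateBox_of_image_eq (image_lowerEntry_erase hi),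
    wt_updateBox_lt (by omega) (by simpa [rowShape]) hi₁ (by simp), fun c' hc' => ?_⟩
  unfold updateBox at hc' ⊢
  split_ifs at hc' ⊢ with e
  · simp at hc'
  · rfl

theorem demStep_iff (ht : IsRowTableau k t) (hin : i < n) :
    DemStep n (rowShape k) (eK n (rowShape k)) i t u ↔ u = mapEntries (lowerEntry i) t := by
  have hn : 0 < n := by omega
  obtain ⟨t₁, h₁, ht₁, hf₁⟩ := exists_maxApply (eRaw n (rowShape k) i)
    (wt n (rowShape k) · (i + 1))
    (fun s => IsRowTableau k s ∧ mapEntries (lowerEntry i) s = mapEntries (lowerEntry i) t)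
    (fun s s' hs hs' => by
      obtain ⟨hrow, hmap, hwt⟩ := hs.1.eRaw_spec hin hs'
      exact ⟨⟨hrow, hmap.trans hs.2⟩, hwt⟩) ⟨ht, rfl⟩
  obtain ⟨t₂, h₂, ⟨ht₂, hf₂⟩, hpaired⟩ := exists_maxApply (eK n (rowShape k) i)
    (wt n (rowShape k) · (i + 1))
    (fun s => (IsRowTableau k s ∧ mapEntries (lowerEntry i) s = mapEntries (lowerEntry i) t) ∧
      ∀ c < k, i + 1 ∈ s 0 c → i ∈ s 0 c)
    (fun s s' hs hs' => by
      obtain ⟨hrow, hmap, hwt, huntouched⟩ := hs.1.1.eK_spec hin hs'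
      refine ⟨⟨⟨hrow, hmap.trans hs.1.2⟩, fun c hc hc₁ => ?_⟩, hwt⟩
      have hbox := huntouched c hc₁
      rw [hbox] at hc₁ ⊢
      exact hs.2 c hc hc₁)
    ⟨⟨ht₁, hf₁⟩, (ht₁.eRaw_eq_none_iff hin).1 h₁.2⟩
  have hfree : ∀ r c, i + 1 ∉ t₂ r c := fun r c h => by
    obtain ⟨rfl, hc⟩ := ht₂.row_eq_zero h
    exact (eK_eq_none_iff hn).1 h₂.2 c hc (hpaired c hc h) h
  have heq : mapEntries (lowerEntry i) t = t₂ := by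
    rw [← hf₂]
    funext r c
    exact image_lowerEntry_of_notMem (hfree r c)
  constructor
  · rintro ⟨s, hs₁, hs₂⟩
    cases h₁.unique hs₁
    rw [heq, h₂.unique hs₂]
  · rintro rfl
    exact ⟨t₁, h₁, heq ▸ h₂⟩

theorem demReach_iff {word : List ℕ} (hword : ∀ i ∈ word, i < n) (ht : IsRowTableau k t) :
    DemReach n (rowShape k) (eK n (rowShape k)) word t u ↔ u = mapEntries (lowerWord word) t := by
  induction word generalizing t with
  | nil =>
    rw [DemReach, eq_comm]
    exact iff_of_eq (congrArg _ (funext₂ fun r c => Finset.image_id'.symm))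
  | cons i rest ih =>
    simp only [DemReach, ht.demStep_iff (hword i List.mem_cons_self), exists_eq_left]
    rw [ih (fun j hj => hword j (List.mem_cons_of_mem i hj)) (ht.map (monotone_lowerEntry i)),
      mapEntries_mapEntries]
    rfl

theorem mapEntries_eq_uTab_iff (ht : IsRowTableau k t) {f : ℕ → ℕ} :
    mapEntries f t = uTab (rowShape k) ↔ ∀ c < k, ∀ a ∈ t 0 c, f a = 1 := by
  constructor
  · intro h c hc a ha
    have : f a ∈ mapEntries f t 0 c := Finset.mem_image_of_mem f ha
    simpa [h, uTab, rowShape, hc] using this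
  · intro h
    funext r c
    by_cases hrc : r = 0 ∧ c < k
    · obtain ⟨rfl, hc⟩ := hrc
      simp only [uTab, rowShape, mapEntries, if_true, hc]
      refine Finset.eq_singleton_iff_unique_mem.2 ⟨?_, ?_⟩
      · obtain ⟨a, ha⟩ := ht.nonempty c hc
        exact Finset.mem_image.2 ⟨a, ha, h c hc a ha⟩
      · simp only [Finset.mem_image]
        rintro _ ⟨a, ha, rfl⟩
        exact h c hc a ha
    · simp only [mapEntries, ht.eq_empty r c hrc, Finset.image_empty, uTab, rowShape]
      split_ifs <;> simp_all

end IsRowTableau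

theorem kDem_rowShape {n k : ℕ} {w : Equiv.Perm ℕ} {word : List ℕ}
    (hred : IsReducedWord n w word) :
    KDem n (rowShape k) (eK n (rowShape k)) word =
      {t | IsSVT n (rowShape k) t ∧ ∀ r c a, a ∈ t r c → a ≤ w 1} := by
  ext t
  simp only [KDem, Set.mem_ofPred_eq]
  refine and_congr_right fun hT => ?_
  have ht := hT.isRowTableau
  rw [ht.demReach_iff fun i hi => (hred.1 i hi).2, eq_comm, ht.mapEntries_eq_uTab_iff]
  simp only [hred.lowerWord_eq_one_iff]
  constructor
  · intro h r c a ha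
    obtain ⟨rfl, hc⟩ := ht.row_eq_zero ha
    exact (h c hc a ha).2
  · exact fun h c _ a ha => ⟨(hT.entryBounds 0 c a ha).1, h 0 c a ha⟩

/-! ### The parabolic coset of `w` -/

theorem isReducedWord_of_length_lt_apply_one {n : ℕ} {l : List ℕ}
    (hl : ∀ i ∈ l, 1 ≤ i ∧ i < n) (hlen : l.length < wordPerm l 1) :
    IsReducedWord n (wordPerm l) l :=
  ⟨hl, rfl, fun l' _ hl' => by
    have := wordPerm_apply_le l' 1
    rw [hl'] at this
    omega⟩

theorem permLength_wordPerm_le {n : ℕ} {l : List ℕ} (hl : ∀ i ∈ l, 1 ≤ i ∧ i < n) :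
    permLength n (wordPerm l) ≤ l.length :=
  Nat.sInf_le ⟨l, hl, rfl, rfl⟩

theorem apply_one_le_permLength_add_one {n : ℕ} {l : List ℕ}
    (hl : ∀ i ∈ l, 1 ≤ i ∧ i < n) :
    wordPerm l 1 ≤ permLength n (wordPerm l) + 1 := by
  obtain ⟨l', -, hl', hlen⟩ := Nat.sInf_mem (s := {len | ∃ l' : List ℕ,
    (∀ i ∈ l', 1 ≤ i ∧ i < n) ∧ wordPerm l' = wordPerm l ∧ l'.length = len})
    ⟨l.length, l, hl, rfl, rfl⟩
  have := wordPerm_apply_le l' 1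
  rw [hl', hlen] at this
  rw [permLength]
  omega

theorem mem_parabolic_iff {n : ℕ} {v : Equiv.Perm ℕ} :
    v ∈ parabolic n ↔ ∃ l, (∀ i ∈ l, 2 ≤ i ∧ i < n) ∧ wordPerm l = v := by
  constructor
  · intro hv
    induction hv using Subgroup.closure_induction with
    | mem x hx =>
      obtain ⟨i, hi, hin, rfl⟩ := hx
      exact ⟨[i], by simp [hi, hin], by simp [wordPerm]⟩
    | one => exact ⟨[], by simp, rfl⟩
    | mul x y _ _ hx hy =>
      obtain ⟨l₁, hl₁, rfl⟩ := hx
      obtain ⟨l₂, hl₂, rfl⟩ := hy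
      exact ⟨l₁ ++ l₂, fun i hi => (List.mem_append.1 hi).elim (hl₁ i) (hl₂ i),
        wordPerm_append _ _⟩
    | inv x _ hx =>
      obtain ⟨l, hl, rfl⟩ := hx
      exact ⟨l.reverse, fun i hi => hl i (List.mem_reverse.1 hi), wordPerm_reverse l⟩
  · rintro ⟨l, hl, rfl⟩
    refine (parabolic n).list_prod_mem fun x hx => ?_
    obtain ⟨i, hi, rfl⟩ := List.mem_map.1 hx
    exact Subgroup.subset_closure ⟨i, (hl i hi).1, (hl i hi).2, rfl⟩

theorem SupportedIn.mem_parabolic {n : ℕ} {v : Equiv.Perm ℕ} (hv : SupportedIn 2 n v) :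
    v ∈ parabolic n := by
  obtain ⟨l, hl, hlv, -⟩ := hv.exists_word (by norm_num)
  exact mem_parabolic_iff.2 ⟨l, hl, hlv⟩

def descendingWord (m : ℕ) : List ℕ := ((List.range m).map (· + 1)).reverse

theorem length_descendingWord (m : ℕ) : (descendingWord m).length = m := by
  simp [descendingWord]

theorem mem_descendingWord {m i : ℕ} : i ∈ descendingWord m ↔ 1 ≤ i ∧ i ≤ m := by
  simp only [descendingWord, List.mem_reverse, List.mem_map, List.mem_range]
  constructor
  · rintro ⟨a, ha, rfl⟩
    omega
  · exact fun h => ⟨i - 1, by omega, by omega⟩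

theorem wordPerm_descendingWord_apply_one (m : ℕ) : wordPerm (descendingWord m) 1 = m + 1 := by
  induction m with
  | zero => rfl
  | succ m ih =>
    rw [descendingWord, List.range_succ, List.map_append, List.reverse_append, List.map_singleton,
      List.reverse_singleton, List.singleton_append, wordPerm_cons, Equiv.Perm.mul_apply,
      ← descendingWord, ih, Equiv.swap_apply_left]

namespace SupportedIn

variable {n : ℕ} {w : Equiv.Perm ℕ}

theorem descendingWord_letters (hw : SupportedIn 1 n w) :
    ∀ i ∈ descendingWord (w 1 - 1), 1 ≤ i ∧ i < n := fun i hi => by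
  rw [mem_descendingWord] at hi
  have := (hw.apply_mem (x := 1) (by omega)).2
  omega

theorem wordPerm_descendingWord_apply_one (hw : SupportedIn 1 n w) :
    wordPerm (descendingWord (w 1 - 1)) 1 = w 1 := by
  rw [SVTCrystal.wordPerm_descendingWord_apply_one, Nat.sub_add_cancel (hw.le_apply le_rfl)]

theorem isReducedWord_descendingWord (hw : SupportedIn 1 n w) :
    IsReducedWord n (wordPerm (descendingWord (w 1 - 1))) (descendingWord (w 1 - 1)) := by
  refine isReducedWord_of_length_lt_apply_one hw.descendingWord_letters ?_
  rw [length_descendingWord, hw.wordPerm_descendingWord_apply_one]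
  have := hw.le_apply (x := 1) le_rfl
  omega

theorem inv_mul_mem_parabolic (hw : SupportedIn 1 n w) :
    (wordPerm (descendingWord (w 1 - 1)))⁻¹ * w ∈ parabolic n := by
  refine (((supportedIn_wordPerm hw.descendingWord_letters).inv.mul hw).of_apply_eq_self
    ?_).mem_parabolic
  rw [Equiv.Perm.mul_apply, Equiv.Perm.inv_eq_iff_eq, hw.wordPerm_descendingWord_apply_one]

end SupportedIn

theorem IsReducedWord.apply_one_le_permLength_add_one {n : ℕ} {w v : Equiv.Perm ℕ}
    {word : List ℕ} (hred : IsReducedWord n w word) (hv : v⁻¹ * w ∈ parabolic n) :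
    w 1 ≤ permLength n v + 1 := by
  obtain ⟨l, hl, hlv⟩ := mem_parabolic_iff.1 hv
  have hv₁ : v 1 = w 1 := by
    have := (supportedIn_wordPerm hl).apply_eq_self (x := 1) (by norm_num)
    rw [hlv, Equiv.Perm.mul_apply, Equiv.Perm.inv_eq_iff_eq] at this
    exact this.symm
  have hvword : wordPerm (word ++ l.reverse) = v := by
    rw [wordPerm_append, wordPerm_reverse, hlv, hred.2.1]
    group
  rw [← hv₁, ← hvword]
  refine SVTCrystal.apply_one_le_permLength_add_one fun i hi =>
    (List.mem_append.1 hi).elim (hred.1 i) fun hi => ?_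
  have := hl i (List.mem_reverse.1 hi)
  omega

theorem kdem_single_row_general (n k : ℕ)
    (w : Equiv.Perm ℕ) (word : List ℕ) (hred : IsReducedWord n w word) :
    (KDem n (rowShape k) (eK n (rowShape k)) word =
      {t | IsSVT n (rowShape k) t ∧ ∀ r c a, a ∈ t r c → a ≤ w 1}) ∧
    (∀ (w' : Equiv.Perm ℕ) (word' : List ℕ), IsReducedWord n w' word' → w' 1 = w 1 →
      KDem n (rowShape k) (eK n (rowShape k)) word' =
        KDem n (rowShape k) (eK n (rowShape k)) word) ∧
    (∀ mword : List ℕ, mword = ((List.range (w 1 - 1)).map (· + 1)).reverse →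
      IsReducedWord n (wordPerm mword) mword ∧
      (wordPerm mword)⁻¹ * w ∈ parabolic n ∧
      ∀ v : Equiv.Perm ℕ, v⁻¹ * w ∈ parabolic n →
        permLength n (wordPerm mword) ≤ permLength n v) := by
  refine ⟨kDem_rowShape hred, fun w' word' hred' hw' => by
    rw [kDem_rowShape hred', kDem_rowShape hred, hw'], ?_⟩
  intro D hD
  obtain rfl : D = descendingWord (w 1 - 1) := hD
  have hw : SupportedIn 1 n w := hred.2.1 ▸ supportedIn_wordPerm hred.1
  refine ⟨hw.isReducedWord_descendingWord, hw.inv_mul_mem_parabolic, fun v hv => ?_⟩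
  calc permLength n (wordPerm (descendingWord (w 1 - 1)))
      ≤ w 1 - 1 := (permLength_wordPerm_le hw.descendingWord_letters).trans_eq
        (length_descendingWord _)
    _ ≤ permLength n v := by
      have := hred.apply_one_le_permLength_add_one hv
      omega

/-- for the one-row shape `(k)`, the K-Demazure crystal of any reduced
word of `w ∈ Sₙ` consists exactly of the one-row set-valued tableaux all of whose entries
are `≤ w(1)`.  In particular it depends only on `w(1)`, i.e. only on the coset
`w⟨s₂,…,s_{n-1}⟩`, whose minimal length representative is `s_{w(1)-1} ⋯ s₂ s₁`. -/
theorem kdem_single_row (n k : ℕ) (hn : 2 ≤ n) (hk : 1 ≤ k)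
    (w : Equiv.Perm ℕ) (word : List ℕ) (hred : IsReducedWord n w word) :
    (KDem n (rowShape k) (eK n (rowShape k)) word =
      {t | IsSVT n (rowShape k) t ∧ ∀ r c a, a ∈ t r c → a ≤ w 1}) ∧
    (∀ (w' : Equiv.Perm ℕ) (word' : List ℕ), IsReducedWord n w' word' → w' 1 = w 1 →
      KDem n (rowShape k) (eK n (rowShape k)) word' =
        KDem n (rowShape k) (eK n (rowShape k)) word) ∧
    (∀ mword : List ℕ, mword = ((List.range (w 1 - 1)).map (· + 1)).reverse →
      IsReducedWord n (wordPerm mword) mword ∧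
      (wordPerm mword)⁻¹ * w ∈ parabolic n ∧
      ∀ v : Equiv.Perm ℕ, v⁻¹ * w ∈ parabolic n →
        permLength n (wordPerm mword) ≤ permLength n v) :=
  kdem_single_row_general n k w word hred

end SVTCrystal

end
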